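/- Let n be a positive integer and α a positive integer with α ≤ n. Then [n-1 choose α-1]_q ≡ (-1)^{α-1} q^{-binom(α,2)} · (1 - (1-q^n)·∑_{i=1}^{α-1} 1/(1-q^i)) (mod Φ_n(q)^2), equivalently q^{binom(α,2)}·[n-1 choose α-1]_q ≡ (-1)^{α-1}(1 - (1-q^n)·∑_{i=1}^{α-1} 1/(1-q^i)) (mod Φ_n(q)^2). -/

import Mathlib

open Finset Polynomial

noncomputable section

/-- The image of a polynomial in the field of rational functions. -/
def toRF (f : Polynomial ℚ) : RatFunc ℚ := algebraMap (Polynomial ℚ) (RatFunc ℚ) f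

/-- The `q`-Pochhammer `(q;q)_m = ∏_{i=1}^m (1 - q^i)` as a rational function in `q`. -/
def qfac (m : ℕ) : RatFunc ℚ := ∏ i ∈ Finset.range m, (1 - RatFunc.X ^ (i + 1))

/-- Gaussian binomial coefficient `[m choose j]_q = (q;q)_m / ((q;q)_j (q;q)_{m-j})`. -/
def qbinom (m j : ℕ) : RatFunc ℚ := qfac m / (qfac j * qfac (m - j))

/-- The `q`-integer `[m]_q = 1 + q + ⋯ + q^{m-1}`. -/
def qint (m : ℕ) : RatFunc ℚ := ∑ i ∈ Finset.range m, RatFunc.X ^ i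

/-- The `q`-Fermat quotient `Q_n(2,q) = ((q^2;q^2)_{n-1}/(q;q)_{n-1} - 1)/[n]_q`. -/
def qFermat (n : ℕ) : RatFunc ℚ :=
  ((∏ i ∈ Finset.range (n - 1), (1 - RatFunc.X ^ (2 * (i + 1)))) /
      (∏ i ∈ Finset.range (n - 1), (1 - RatFunc.X ^ (i + 1))) - 1) / qint n

/-- Congruence of rational functions modulo `Φ_n(q)^e`: the difference can be written as
`Φ_n(q)^e · f / g` with `g` not divisible by `Φ_n(q)`. -/
def phiCong (n e : ℕ) (A B : RatFunc ℚ) : Prop :=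
  ∃ f g : Polynomial ℚ, ¬ (Polynomial.cyclotomic n ℚ ∣ g) ∧
    (A - B) * toRF g = toRF ((Polynomial.cyclotomic n ℚ) ^ e * f)

lemma prod_sub_expand {ι R : Type*} [CommRing R] [DecidableEq ι] (T : R) (d : ι → R)
    (s : Finset ι) :
    ∃ p : R, ∏ j ∈ s, (T - d j) =
      (-1) ^ s.card * ((∏ j ∈ s, d j) - T * ∑ j ∈ s, ∏ k ∈ s.erase j, d k) + T ^ 2 * p := by
  classical
  induction s using Finset.induction_on with
  | empty => exact ⟨0, by simp⟩
  | @insert a s ha ih =>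
    obtain ⟨p, hp⟩ := ih
    refine ⟨(T - d a) * p - (-1) ^ s.card * (∑ j ∈ s, ∏ k ∈ s.erase j, d k), ?_⟩
    have hsum : ∑ j ∈ insert a s, ∏ k ∈ (insert a s).erase j, d k
        = (∏ k ∈ s, d k) + d a * ∑ j ∈ s, ∏ k ∈ s.erase j, d k := by
      rw [Finset.sum_insert ha, Finset.erase_insert ha, Finset.mul_sum]
      congr 1
      refine Finset.sum_congr rfl fun j hj => ?_
      rw [Finset.erase_insert_of_ne (by rintro rfl; exact ha hj),
        Finset.prod_insert (fun h => ha (Finset.mem_of_mem_erase h))]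
    rw [Finset.prod_insert ha, hp, Finset.prod_insert ha, hsum, Finset.card_insert_of_notMem ha]
    ring

lemma cyclo_not_dvd_X_pow_sub_one {n j : ℕ} (hn : 0 < n) (hj : 0 < j) (hjn : j < n) :
    ¬ (cyclotomic n ℚ ∣ (1 - X ^ j : Polynomial ℚ)) := by
  intro h
  have h2 : cyclotomic n ℂ ∣ (1 - X ^ j : Polynomial ℂ) := by
    have := Polynomial.map_dvd (algebraMap ℚ ℂ) h
    simpa [map_cyclotomic] using this
  set ζ := Complex.exp (2 * Real.pi * Complex.I / n)
  have hζ : IsPrimitiveRoot ζ n := Complex.isPrimitiveRoot_exp n hn.ne'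
  have hroot : (cyclotomic n ℂ).IsRoot ζ := hζ.isRoot_cyclotomic hn
  have : (1 - X ^ j : Polynomial ℂ).IsRoot ζ := hroot.dvd h2
  have hz : ζ ^ j = 1 := by
    simp [Polynomial.IsRoot, sub_eq_zero] at this
    exact this.symm
  have := Nat.le_of_dvd hj ((hζ.pow_eq_one_iff_dvd j).mp hz)
  omega

lemma cyclo_prime {n : ℕ} (hn : 0 < n) : Prime (cyclotomic n ℚ) :=
  UniqueFactorizationMonoid.irreducible_iff_prime.mp (cyclotomic.irreducible_rat hn)

lemma cyclo_not_dvd_prod {n m : ℕ} (hn : 0 < n) (hm : m < n) :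
    ¬ (cyclotomic n ℚ ∣ ∏ j ∈ Finset.Icc 1 m, (1 - X ^ j : Polynomial ℚ)) := by
  intro h
  obtain ⟨a, ha, hd⟩ := ((cyclo_prime hn).dvd_finset_prod_iff _).mp h
  simp only [Finset.mem_Icc] at ha
  exact cyclo_not_dvd_X_pow_sub_one hn (by omega) (by omega) hd

lemma toRF_ne_zero {p : Polynomial ℚ} (hp : p ≠ 0) : toRF p ≠ 0 :=
  (map_ne_zero_iff _ (RatFunc.algebraMap_injective ℚ)).mpr hp

lemma one_sub_X_pow_poly_ne_zero {j : ℕ} (hj : 0 < j) : (1 - X ^ j : Polynomial ℚ) ≠ 0 := by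
  have h := Polynomial.X_pow_sub_C_ne_zero (R := ℚ) hj 1
  intro h2
  apply h
  have : (X ^ j - C 1 : Polynomial ℚ) = -(1 - X ^ j) := by rw [C_1]; ring
  rw [this, h2, neg_zero]

lemma toRF_one_sub_X_pow (j : ℕ) : toRF (1 - X ^ j) = 1 - RatFunc.X ^ j := by
  simp [toRF, map_sub, map_one, map_pow, RatFunc.algebraMap_X]

lemma one_sub_X_pow_ne_zero {j : ℕ} (hj : 0 < j) : (1 - RatFunc.X ^ j : RatFunc ℚ) ≠ 0 := by
  rw [← toRF_one_sub_X_pow]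
  exact toRF_ne_zero (one_sub_X_pow_poly_ne_zero hj)

lemma qfac_ne_zero (m : ℕ) : qfac m ≠ 0 := by
  apply Finset.prod_ne_zero_iff.mpr
  intro i _
  exact one_sub_X_pow_ne_zero (Nat.succ_pos i)

lemma sum_inv_mul_prod (m : ℕ) :
    (∑ i ∈ Icc 1 m, 1 / (1 - RatFunc.X ^ i)) * toRF (∏ j ∈ Icc 1 m, (1 - X ^ j)) =
    toRF (∑ i ∈ Icc 1 m, ∏ k ∈ (Icc 1 m).erase i, (1 - X ^ k)) := by
  simp only [toRF, map_prod, map_sum, map_sub, map_one, map_pow, RatFunc.algebraMap_X]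
  rw [Finset.sum_mul]
  refine Finset.sum_congr rfl fun i hi => ?_
  have hi1 : 0 < i := by simp only [Finset.mem_Icc] at hi; omega
  rw [← Finset.mul_prod_erase _ _ hi, one_div, inv_mul_cancel_left₀ (one_sub_X_pow_ne_zero hi1)]

lemma qfac_eq_Icc (m : ℕ) : qfac m = ∏ j ∈ Icc 1 m, (1 - RatFunc.X ^ j) := by
  rw [qfac, show Icc 1 m = Ico 1 (m + 1) by rfl, Finset.prod_Ico_eq_prod_range]
  simp [add_comm]

lemma qfac_split {n m : ℕ} (hm : m ≤ n - 1) :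
    qfac (n - 1) = qfac (n - 1 - m) * ∏ j ∈ Icc 1 m, (1 - RatFunc.X ^ (n - j)) := by
  rw [qfac, qfac]
  have h := Finset.prod_Ico_consecutive (fun i => (1 - RatFunc.X ^ (i + 1) : RatFunc ℚ))
    (Nat.zero_le (n - 1 - m)) (by omega : n - 1 - m ≤ n - 1)
  rw [range_eq_Ico, ← h, ← range_eq_Ico]
  congr 1
  refine Finset.prod_nbij' (fun i => n - 1 - i) (fun j => n - 1 - j) ?_ ?_ ?_ ?_ ?_
  · intro a ha; simp only [Finset.mem_Ico] at ha; simp only [Finset.mem_Icc]; omega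
  · intro a ha; simp only [Finset.mem_Icc] at ha; simp only [Finset.mem_Ico]; omega
  · intro a ha; simp only [Finset.mem_Ico] at ha; omega
  · intro a ha; simp only [Finset.mem_Icc] at ha; omega
  · intro a ha; simp only [Finset.mem_Ico] at ha
    congr 2
    omega

lemma sum_Icc_id_eq_choose {α : ℕ} (hα : 0 < α) : ∑ j ∈ Icc 1 (α - 1), j = α.choose 2 := by
  have e1 : ∑ j ∈ Icc 1 (α - 1), j = ∑ j ∈ range α, j := by
    rw [range_eq_Ico, ← Finset.sum_Ico_consecutive (fun i => i) (Nat.zero_le 1) hα]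
    have : Icc 1 (α - 1) = Ico 1 α := by
      rw [← Finset.Ico_add_one_right_eq_Icc]; congr 1; omega
    rw [this]
    simp
  rw [e1, Finset.sum_range_id, Nat.choose_two_right]

lemma key1 {n α : ℕ} (hn : 0 < n) (hα : 0 < α) (hαn : α ≤ n) :
    RatFunc.X ^ (α.choose 2) * qbinom (n - 1) (α - 1) *
      toRF (∏ j ∈ Icc 1 (α - 1), (1 - X ^ j)) =
    toRF (∏ j ∈ Icc 1 (α - 1), (X ^ j - X ^ n)) := by
  set m := α - 1 with hmdef
  have hm : m ≤ n - 1 := by omega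
  have hD : toRF (∏ j ∈ Icc 1 m, (1 - X ^ j)) = qfac m := by
    rw [qfac_eq_Icc]
    simp only [toRF, map_prod, map_sub, map_one, map_pow, RatFunc.algebraMap_X]
  rw [qbinom, qfac_split hm, hD]
  have hq1 : qfac m ≠ 0 := qfac_ne_zero m
  have hq2 : qfac (n - 1 - m) ≠ 0 := qfac_ne_zero _
  have hcancel : qfac (n - 1 - m) * (∏ j ∈ Icc 1 m, (1 - RatFunc.X ^ (n - j))) /
      (qfac m * qfac (n - 1 - m)) = (∏ j ∈ Icc 1 m, (1 - RatFunc.X ^ (n - j))) / qfac m := by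
    field_simp
  rw [hcancel, mul_assoc, div_mul_cancel₀ _ hq1]
  have hc : (RatFunc.X : RatFunc ℚ) ^ (α.choose 2) = ∏ j ∈ Icc 1 m, (RatFunc.X : RatFunc ℚ) ^ j := by
    rw [Finset.prod_pow_eq_pow_sum, sum_Icc_id_eq_choose hα]
  rw [hc, ← Finset.prod_mul_distrib]
  simp only [toRF, map_prod, map_sub, map_pow, RatFunc.algebraMap_X]
  refine Finset.prod_congr rfl fun j hj => ?_
  simp only [Finset.mem_Icc] at hj
  rw [mul_sub, mul_one, ← pow_add]
  congr 2
  omega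

theorem stmt_9 (n α : ℕ) (hn : 0 < n) (hα : 0 < α) (hαn : α ≤ n) :
    phiCong n 2 (RatFunc.X ^ (α.choose 2) * qbinom (n - 1) (α - 1))
      ((-1 : RatFunc ℚ) ^ (α - 1)
        * (1 - (1 - RatFunc.X ^ n) * ∑ i ∈ Finset.Icc 1 (α - 1), 1 / (1 - RatFunc.X ^ i))) := by
  classical
  set m := α - 1 with hmdef
  set D : Polynomial ℚ := ∏ j ∈ Icc 1 m, (1 - X ^ j) with hDdef
  set N : Polynomial ℚ := ∑ i ∈ Icc 1 m, ∏ k ∈ (Icc 1 m).erase i, (1 - X ^ k) with hNdef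
  obtain ⟨c, hc⟩ : cyclotomic n ℚ ∣ (1 - X ^ n : Polynomial ℚ) := by
    have h := Polynomial.cyclotomic.dvd_X_pow_sub_one n ℚ
    have : (1 - X ^ n : Polynomial ℚ) = -(X ^ n - 1) := by ring
    rw [this]
    exact Dvd.dvd.neg_right h
  obtain ⟨p, hp⟩ := prod_sub_expand ((1 : Polynomial ℚ) - X ^ n) (fun j => 1 - X ^ j) (Icc 1 m)
  simp only [] at hp
  refine ⟨c ^ 2 * p, D, cyclo_not_dvd_prod hn (by omega), ?_⟩
  have hF1 := key1 hn hα hαn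
  have hF2 : ((-1 : RatFunc ℚ) ^ m *
      (1 - (1 - RatFunc.X ^ n) * ∑ i ∈ Icc 1 m, 1 / (1 - RatFunc.X ^ i))) * toRF D
      = toRF ((-1) ^ m * (D - (1 - X ^ n) * N)) := by
    have hS := sum_inv_mul_prod m
    have expand : toRF ((-1) ^ m * (D - (1 - X ^ n) * N))
        = (-1) ^ m * (toRF D - toRF (1 - X ^ n) * toRF N) := by
      simp [toRF]
    rw [← hDdef, ← hNdef] at hS
    rw [expand, ← hS, toRF_one_sub_X_pow]
    ring
  rw [sub_mul, hF1, hF2]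
  have hmap : toRF (∏ j ∈ Icc 1 m, (X ^ j - X ^ n)) - toRF ((-1) ^ m * (D - (1 - X ^ n) * N))
      = toRF ((∏ j ∈ Icc 1 m, (X ^ j - X ^ n)) - (-1) ^ m * (D - (1 - X ^ n) * N)) := by
    simp [toRF]
  rw [hmap]
  congr 1
  have hprod : (∏ j ∈ Icc 1 m, (X ^ j - X ^ n : Polynomial ℚ))
      = ∏ j ∈ Icc 1 m, ((1 - X ^ n) - (1 - X ^ j)) :=
    Finset.prod_congr rfl fun j _ => by ring
  have hcard : (Icc 1 m).card = m := by rw [Nat.card_Icc]; omega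
  rw [hprod, hp, hcard, hc]
  ring
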